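/- Let c = c_◁ s_aff c_▷ be a Coxeter element in the Weyl group of an affine root system of rank n. There exists a unique generalized 1-eigenvector γ_c of c contained in the subspace V_fin, i.e. a unique γ_c ∈ V_fin with (c − 1)γ_c = δ. Moreover, γ_c is the unique vector v ∈ V_fin that is fixed by c_◁ t_θ c_▷ and satisfies K(θ^∨, c_▷ v) = 1. -/

import Mathlib

open scoped BigOperators

noncomputable section

/-- A symmetrizable generalized Cartan matrix of affine type, together with the
coefficient vector `dz` of the primitive positive imaginary root `δ` spanning the
(one dimensional) kernel of the associated symmetric bilinear form. -/
structure AffineGCM (n : ℕ) where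
  /-- the generalized Cartan matrix -/
  a : Matrix (Fin n) (Fin n) ℤ
  /-- symmetrizing factors -/
  d : Fin n → ℝ
  diag : ∀ i, a i i = 2
  offdiag : ∀ i j, i ≠ j → a i j ≤ 0
  d_pos : ∀ i, 0 < d i
  symmetrizable : ∀ i j, d i * (a i j : ℝ) = d j * (a j i : ℝ)
  /-- `K` is positive semidefinite (on the real span of the simple roots) -/
  posSemidef : ∀ g : Fin n → ℝ, 0 ≤ ∑ i, ∑ j, g i * g j * (d i * (a i j : ℝ))
  /-- `K` is not positive definite -/
  not_posDef : ∃ g : Fin n → ℝ, g ≠ 0 ∧ ∑ i, ∑ j, g i * g j * (d i * (a i j : ℝ)) = 0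
  /-- the restriction of `K` to the span of every proper subset of the simple roots
  is positive definite -/
  proper_posDef : ∀ J : Finset (Fin n), J ≠ Finset.univ →
    ∀ g : Fin n → ℝ, (∀ i, i ∉ J → g i = 0) → g ≠ 0 →
      0 < ∑ i, ∑ j, g i * g j * (d i * (a i j : ℝ))
  /-- coordinates of the positive imaginary root `δ` in the basis of simple roots -/
  dz : Fin n → ℤ
  dz_pos : ∀ i, 0 < dz i
  /-- `δ` is the imaginary root closest to the origin: its coordinates are coprime -/
  dz_prim : Finset.univ.gcd dz = 1
  /-- `δ` spans the kernel of `K` -/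
  dz_ker : ∀ j, ∑ i, (dz i : ℝ) * (d i * (a i j : ℝ)) = 0

namespace AffineGCM

variable {n : ℕ}

/-- The ambient vector space `V`, with the simple roots as standard basis. -/
abbrev V (n : ℕ) := Fin n → ℂ

/-- the simple root `α i` (the `i`-th standard basis vector) -/
def α (i : Fin n) : V n := Pi.single i 1

/-- a vector is *positive* if it lies in the nonnegative real span of the simple roots -/
def IsPosRoot (v : V n) : Prop := ∀ i, 0 ≤ (v i).re ∧ (v i).im = 0

/-- a vector is *negative* if it lies in the nonpositive real span of the simple roots -/
def IsNegRoot (v : V n) : Prop := ∀ i, (v i).re ≤ 0 ∧ (v i).im = 0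

/-- the `g`-orbit of `x`: all `g ^ k • x` for integers `k` -/
def orbit (g : V n ≃ₗ[ℂ] V n) (x : V n) : Set (V n) := Set.range fun k : ℤ => (g ^ k) x

/-- `U g`: the span of all eigenvectors of `g`, i.e. the direct sum of its eigenspaces -/
def eigSpan (g : V n ≃ₗ[ℂ] V n) : Submodule ℂ (V n) :=
  ⨆ μ : ℂ, Module.End.eigenspace (g : Module.End ℂ (V n)) μ

/-- the span `V_fin` of the simple roots other than `α aff` -/
def Vfin (aff : Fin n) : Submodule ℂ (V n) :=
  Submodule.span ℂ (α '' {i : Fin n | i ≠ aff})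

variable (C : AffineGCM n)

/-- the simple coroot `α i ^ ∨ = (d i)⁻¹ • α i` -/
def coroot (i : Fin n) : V n := ((C.d i : ℂ))⁻¹ • α i

/-- The symmetric bilinear form `K`, determined by `K (coroot i) (α j) = a i j`,
that is, `K (α i) (α j) = d i * a i j`. -/
def K : V n →ₗ[ℂ] V n →ₗ[ℂ] ℂ :=
  LinearMap.mk₂ ℂ
    (fun x y => ∑ i, ∑ j, x i * y j * ((C.d i : ℂ) * (C.a i j : ℂ)))
    (fun x x' y => by
      simp only [Pi.add_apply, add_mul, Finset.sum_add_distrib])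
    (fun r x y => by
      simp only [Pi.smul_apply, smul_eq_mul, Finset.mul_sum]
      exact Finset.sum_congr rfl fun i _ => Finset.sum_congr rfl fun j _ => by ring)
    (fun x y y' => by
      simp only [Pi.add_apply, mul_add, add_mul, Finset.sum_add_distrib])
    (fun r x y => by
      simp only [Pi.smul_apply, smul_eq_mul, Finset.mul_sum]
      exact Finset.sum_congr rfl fun i _ => Finset.sum_congr rfl fun j _ => by ring)

/-- the linear map `v ↦ v - K x v • y`; reflections are special cases -/
def reflMap (x y : V n) : V n →ₗ[ℂ] V n where
  toFun v := v - C.K x v • y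
  map_add' u v := by simp only [map_add, add_smul]; abel
  map_smul' r u := by simp only [map_smul, smul_eq_mul, RingHom.id_apply, smul_sub, smul_smul]

lemma reflMap_apply (x y v : V n) : C.reflMap x y v = v - C.K x v • y := rfl

/-- the simple reflection `s i` as a linear endomorphism -/
def sLin (i : Fin n) : V n →ₗ[ℂ] V n := C.reflMap (C.coroot i) (α i)

lemma K_α_α (i j : Fin n) : C.K (α i) (α j) = (C.d i : ℂ) * (C.a i j : ℂ) := by
  simp [K, α, LinearMap.mk₂_apply, Pi.single_apply, ite_mul, zero_mul,
    Finset.sum_ite_eq', Finset.mem_univ]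

lemma K_coroot_α (i j : Fin n) : C.K (C.coroot i) (α j) = (C.a i j : ℂ) := by
  have hd : (C.d i : ℂ) ≠ 0 := by exact_mod_cast ne_of_gt (C.d_pos i)
  simp only [coroot, map_smul, LinearMap.smul_apply, smul_eq_mul, K_α_α]
  field_simp

lemma sLin_invol (i : Fin n) (v : V n) : C.sLin i (C.sLin i v) = v := by
  have h2 : C.K (C.coroot i) (α i) = 2 := by
    rw [K_coroot_α, C.diag]; norm_num
  simp only [sLin, reflMap_apply, map_sub, map_smul, h2, smul_eq_mul]
  module

/-- the simple reflection `s i` -/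
def s (i : Fin n) : V n ≃ₗ[ℂ] V n :=
  LinearEquiv.ofLinear (C.sLin i) (C.sLin i)
    (LinearMap.ext fun v => C.sLin_invol i v) (LinearMap.ext fun v => C.sLin_invol i v)

/-- the Weyl group `W`, as a subgroup of the group of linear automorphisms of `V` -/
def Wgroup : Subgroup (V n ≃ₗ[ℂ] V n) := Subgroup.closure (Set.range C.s)

/-- the Coxeter element `c = s 1 * s 2 * ⋯ * s n` -/
def cox : V n ≃ₗ[ℂ] V n := (List.ofFn C.s).prod

/-- the positive imaginary root `δ` -/
def δv : V n := fun i => ((C.dz i : ℤ) : ℂ)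

/-- the set of real roots: `W`-images of the simple roots -/
def realRoots : Set (V n) := {v | ∃ w ∈ C.Wgroup, ∃ i, w (α i) = v}

/-- the root system `Φ`: real roots together with the imaginary roots `k • δ`, `k ≠ 0` -/
def Φ : Set (V n) := C.realRoots ∪ {v | ∃ k : ℤ, k ≠ 0 ∧ v = (k : ℂ) • C.δv}

/-- `T→ = {α 1, s 1 α 2, …, s 1 ⋯ s (n-1) α n}` -/
def Tproj : Set (V n) :=
  Set.range fun k : Fin n => ((List.ofFn C.s).take k.val).prod (α k)

/-- `T← = {α n, s n α (n-1), …, s n ⋯ s 2 α 1}` -/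
def Tinj : Set (V n) :=
  Set.range fun k : Fin n => ((List.ofFn C.s).reverse.take (n - 1 - k.val)).prod (α k)

/-- `Φ_fin`, the finite root system `Φ ∩ V_fin` -/
def Φfin (aff : Fin n) : Set (V n) := C.Φ ∩ (Vfin aff : Set (V n))

/-- the root `θ = δ - [δ : α aff] • α aff` of `Φ_fin` -/
def θv (aff : Fin n) : V n := C.δv - ((C.dz aff : ℤ) : ℂ) • α aff

/-- the reflection `t β : v ↦ v - K (β^∨) v • β` in a (real) root `β`,
where `β^∨ = (2 / K β β) • β` -/
def tRefl (β : V n) : V n →ₗ[ℂ] V n := C.reflMap ((2 / C.K β β) • β) β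

/-- `c_◁ = s 1 * ⋯ * s (aff - 1)` -/
def cleft (aff : Fin n) : V n →ₗ[ℂ] V n := ((List.ofFn C.sLin).take aff.val).prod

/-- `c_▷ = s (aff + 1) * ⋯ * s n` -/
def cright (aff : Fin n) : V n →ₗ[ℂ] V n := ((List.ofFn C.sLin).drop (aff.val + 1)).prod

/-- `Υ^fin = Φ_fin ∩ U c` -/
def Υfin (aff : Fin n) : Set (V n) := C.Φfin aff ∩ (eigSpan C.cox : Set (V n))

/-- `B` is a simple system for a set `Θ` of roots: a linearly independent subset of `Θ`
such that every element of `Θ` is a nonnegative or a nonpositive combination of `B`. -/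
def IsSimpleSystem (Θ : Set (V n)) (B : Finset (V n)) : Prop :=
  ↑B ⊆ Θ ∧ LinearIndependent ℂ (fun b : B => (b : V n)) ∧
    ∀ v ∈ Θ, ∃ g : V n → ℝ, ((∀ b ∈ B, 0 ≤ g b) ∨ (∀ b ∈ B, g b ≤ 0)) ∧
      v = ∑ b ∈ B, (g b : ℂ) • b

/-- two roots of `Θ` are connected if they are joined by a chain of roots of `Θ`
that are pairwise non-orthogonal (with respect to `K`) -/
def Connected (Θ : Set (V n)) (x y : V n) : Prop :=
  Relation.ReflTransGen (fun u v => u ∈ Θ ∧ v ∈ Θ ∧ C.K u v ≠ 0) x y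

/-- the irreducible component of `x` in `Θ` -/
def component (Θ : Set (V n)) (x : V n) : Set (V n) := {y | y ∈ Θ ∧ C.Connected Θ x y}

/-- a set of roots is of finite type `A` if it consists exactly of the vectors
`±(β i + β (i+1) + ⋯ + β j)` for a linearly independent family `β 1, …, β k` -/
def IsTypeA (Θ : Set (V n)) : Prop :=
  ∃ (k : ℕ) (β : Fin k → V n), LinearIndependent ℂ β ∧ (∀ i, β i ∈ Θ) ∧
    Θ = {v | ∃ i j : Fin k, i ≤ j ∧
      (v = ∑ l ∈ Finset.Icc i j, β l ∨ v = -∑ l ∈ Finset.Icc i j, β l)}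

/-- `Ω = {β 1, t (β 1) (β 2), …, t (β 1) ⋯ t (β (m-1)) (β m)}` for an ordered
tuple `β` of roots -/
def Ωset {m : ℕ} (β : Fin m → V n) : Set (V n) :=
  Set.range fun j : Fin m => (((List.ofFn fun i => C.tRefl (β i)).take j.val).prod) (β j)

/-- `s i` is initial in a Coxeter element `c` if `c` is the product of a permutation
of all the simple reflections starting with `s i` -/
def IsInitial (i : Fin n) (c : V n ≃ₗ[ℂ] V n) : Prop :=
  ∃ l : List (Fin n), (i :: l).Perm (List.finRange n) ∧ ((i :: l).map C.s).prod = c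

/-- `s i` is final in a Coxeter element `c` if `c` is the product of a permutation
of all the simple reflections ending with `s i` -/
def IsFinal (i : Fin n) (c : V n ≃ₗ[ℂ] V n) : Prop :=
  ∃ l : List (Fin n), (l ++ [i]).Perm (List.finRange n) ∧ ((l ++ [i]).map C.s).prod = c

/-- the skew-symmetric bilinear form `ω_c`, determined by
`ω_c (coroot i) (α j) = a i j` if `i > j`, `= 0` if `i = j`, `= -a i j` if `i < j` -/
def ω : V n →ₗ[ℂ] V n →ₗ[ℂ] ℂ :=
  LinearMap.mk₂ ℂ
    (fun x y => ∑ i, ∑ j, x i * y j *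
      ((if j < i then 1 else if i = j then 0 else -1) * ((C.d i : ℂ) * (C.a i j : ℂ))))
    (fun x x' y => by
      simp only [Pi.add_apply, add_mul, Finset.sum_add_distrib])
    (fun r x y => by
      simp only [Pi.smul_apply, smul_eq_mul, Finset.mul_sum]
      exact Finset.sum_congr rfl fun i _ => Finset.sum_congr rfl fun j _ => by ring)
    (fun x y y' => by
      simp only [Pi.add_apply, mul_add, add_mul, Finset.sum_add_distrib])
    (fun r x y => by
      simp only [Pi.smul_apply, smul_eq_mul, Finset.mul_sum]
      exact Finset.sum_congr rfl fun i _ => Finset.sum_congr rfl fun j _ => by ring)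

/-!
Peeling the simple reflections off `c = s₁ ⋯ sₙ` one at a time shows that the `i`-th coordinate
of `v - c v` is `K (αᵢ^∨) v` minus `∑_{j > i} a i j (v - c v) j`. Multiplied by `dᵢ` this is the
identity `K x v = E x (v - c v)`, where `E = (K - ω) / 2` is the upper triangular half of `K`; in
particular `E` is nondegenerate. Hence a vector fixed by `c` lies in the kernel `ℂ δ` of `K`, and a
vector of `V_fin` fixed by `c` is zero, since `K` is definite there. For existence, `x ↦ ω x δ`
vanishes on `ker K = ℂ δ` because `ω` is alternating, so it equals `2 K x γ` for some `γ`, and then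
`E x ((c - 1) γ - δ) = 0` for all `x`; subtracting a multiple of `δ` moves `γ` into `V_fin`.
Finally `s_aff = t_θ + K (θ^∨) (·) • δ`, so `c v = c_◁ t_θ c_▷ v + K (θ^∨) (c_▷ v) • δ`, and
comparing `α_aff`-coordinates, which `c_◁ t_θ c_▷` does not change, gives the second description
of `γ_c`.
-/

lemma d_ne_zero (i : Fin n) : (C.d i : ℂ) ≠ 0 := by exact_mod_cast (C.d_pos i).ne'

lemma dz_ne_zero (i : Fin n) : (C.dz i : ℂ) ≠ 0 := by exact_mod_cast (C.dz_pos i).ne'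

lemma d_mul_a_symm (i j : Fin n) : (C.d i : ℂ) * C.a i j = C.d j * C.a j i := by
  exact_mod_cast C.symmetrizable i j

lemma K_symm (x y : V n) : C.K x y = C.K y x := by
  simp only [K, LinearMap.mk₂_apply]
  rw [Finset.sum_comm]
  refine Finset.sum_congr rfl fun i _ => Finset.sum_congr rfl fun j _ => ?_
  rw [C.d_mul_a_symm j i]
  ring

lemma K_δ_left (y : V n) : C.K C.δv y = 0 := by
  simp only [K, LinearMap.mk₂_apply, δv]
  rw [Finset.sum_comm]
  refine Finset.sum_eq_zero fun j _ => ?_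
  have h : ∑ i, (C.dz i : ℂ) * (C.d i * C.a i j) = 0 := by exact_mod_cast C.dz_ker j
  calc _ = y j * ∑ i, (C.dz i : ℂ) * (C.d i * C.a i j) := by
        rw [Finset.mul_sum]; exact Finset.sum_congr rfl fun _ _ => by ring
    _ = 0 := by rw [h, mul_zero]

lemma K_δ_right (x : V n) : C.K x C.δv = 0 := by rw [K_symm, K_δ_left]

lemma ω_self (x : V n) : C.ω x x = 0 := by
  have h : C.ω x x = -C.ω x x := by
    conv_rhs => simp only [ω, LinearMap.mk₂_apply]; rw [Finset.sum_comm]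
    simp only [ω, LinearMap.mk₂_apply, ← Finset.sum_neg_distrib]
    refine Finset.sum_congr rfl fun i _ => Finset.sum_congr rfl fun j _ => ?_
    rw [C.d_mul_a_symm i j]
    rcases lt_trichotomy i j with h | rfl | h
    · simp only [if_neg (not_lt_of_gt h), if_neg h.ne, if_neg h.ne', if_pos h]; ring
    · simp
    · simp only [if_pos h, if_neg (not_lt_of_gt h), if_neg h.ne, if_neg h.ne']; ring
  exact self_eq_neg.mp h

lemma K_coroot_left (i : Fin n) (y : V n) : C.K (C.coroot i) y = ∑ j, (C.a i j : ℂ) * y j := by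
  simp only [coroot, K, α, LinearMap.mk₂_apply, Pi.smul_apply, Pi.single_apply]
  simp [C.d_ne_zero i, mul_comm, mul_left_comm]

lemma K_α_left (i : Fin n) (y : V n) : C.K (α i) y = C.d i * ∑ j, (C.a i j : ℂ) * y j := by
  rw [← K_coroot_left]
  simp only [coroot, map_smul, LinearMap.smul_apply, smul_eq_mul]
  field_simp [C.d_ne_zero i]

lemma ω_α_left (i : Fin n) (y : V n) :
    C.ω (α i) y = C.d i * ∑ j, (if j < i then 1 else if i = j then 0 else -1) * C.a i j * y j := by
  simp only [ω, LinearMap.mk₂_apply, Finset.mul_sum]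
  rw [Fintype.sum_eq_single i fun k hk => by simp [α, hk]]
  refine Finset.sum_congr rfl fun j _ => ?_
  simp only [α, Pi.single_eq_same]
  ring

lemma K_sub_ω_α_left (i : Fin n) (y : V n) :
    C.K (α i) y - C.ω (α i) y =
      2 * C.d i * (y i + ∑ j, if i < j then (C.a i j : ℂ) * y j else 0) := by
  have hy : y i = ∑ j, if i = j then y j else 0 := by simp
  rw [K_α_left, ω_α_left, ← mul_sub, ← Finset.sum_sub_distrib, hy, ← Finset.sum_add_distrib,
    mul_comm 2, mul_assoc]
  congr 1
  rw [Finset.mul_sum]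
  refine Finset.sum_congr rfl fun j _ => ?_
  rcases lt_trichotomy i j with h | rfl | h
  · simp only [if_neg (not_lt_of_gt h), if_neg h.ne, if_pos h]; ring
  · simp [C.diag]
  · simp only [if_pos h, if_neg (not_lt_of_gt h), if_neg h.ne']; ring

lemma sLin_apply (i : Fin n) (v : V n) :
    C.sLin i v = v - (∑ j, (C.a i j : ℂ) * v j) • α i := by
  rw [sLin, reflMap_apply, K_coroot_left]

lemma sLin_apply_of_ne {i k : Fin n} (h : i ≠ k) (v : V n) : C.sLin i v k = v k := by
  simp [sLin_apply, α, h.symm]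

lemma sLin_apply_self (i : Fin n) (v : V n) :
    C.sLin i v i = v i - ∑ j, (C.a i j : ℂ) * v j := by
  simp [sLin_apply, α]

lemma sLin_δ (i : Fin n) : C.sLin i C.δv = C.δv := by
  rw [sLin, reflMap_apply, coroot, map_smul, LinearMap.smul_apply, K_δ_right, smul_zero,
    zero_smul, sub_zero]

def coordFixing (k : Fin n) : Submonoid (Module.End ℂ (V n)) where
  carrier := {f | ∀ v, f v k = v k}
  mul_mem' hf hg v := (hf _).trans (hg v)
  one_mem' _ := rfl

lemma cleft_mem_coordFixing {i k : Fin n} (h : i ≤ k) : C.cleft i ∈ coordFixing k := by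
  refine Submonoid.list_prod_mem _ fun f hf => ?_
  obtain ⟨j, hj, rfl⟩ := List.mem_take_iff_getElem.mp hf
  intro v
  simp only [List.getElem_ofFn]
  simp only [List.length_ofFn, lt_min_iff] at hj
  exact C.sLin_apply_of_ne (Fin.ne_of_lt (lt_of_lt_of_le hj.1 h)) v

lemma cright_mem_coordFixing {i k : Fin n} (h : k ≤ i) : C.cright i ∈ coordFixing k := by
  refine Submonoid.list_prod_mem _ fun f hf => ?_
  obtain ⟨j, hj, rfl⟩ := List.mem_drop_iff_getElem.mp hf
  intro v
  simp only [List.getElem_ofFn]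
  have hki : (k : ℕ) ≤ i := h
  exact C.sLin_apply_of_ne (Fin.ne_of_gt (by simp only [Fin.lt_def]; omega)) v

lemma cox_apply (v : V n) : C.cox v = (List.ofFn C.sLin).prod v := by
  have h := map_list_prod (LinearEquiv.automorphismGroup.toLinearMapMonoidHom (R := ℂ) (M := V n))
    (List.ofFn C.s)
  rw [List.map_ofFn] at h
  exact LinearMap.congr_fun h v

lemma list_prod_δv {l : List (Module.End ℂ (V n))} (hl : ∀ f ∈ l, ∃ i, C.sLin i = f) :
    l.prod C.δv = C.δv := by
  suffices l.prod ∈ MulAction.stabilizerSubmonoid (Module.End ℂ (V n)) C.δv from this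
  refine Submonoid.list_prod_mem _ fun f hf => ?_
  obtain ⟨i, rfl⟩ := hl f hf
  exact C.sLin_δ i

lemma cleft_δv (i : Fin n) : C.cleft i C.δv = C.δv :=
  C.list_prod_δv fun _ hf => List.mem_ofFn.mp (List.mem_of_mem_take hf)

lemma cox_δv : C.cox C.δv = C.δv := by
  rw [cox_apply]
  exact C.list_prod_δv fun _ hf => List.mem_ofFn.mp hf

lemma prod_ofFn_sLin (i : Fin n) :
    (List.ofFn C.sLin).prod = C.cleft i * C.sLin i * C.cright i := by
  have h : List.ofFn C.sLin =
      (List.ofFn C.sLin).take i ++ C.sLin i :: (List.ofFn C.sLin).drop (i + 1) := by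
    rw [← List.getElem_ofFn (f := C.sLin) (i := i) (by simp), ← List.drop_eq_getElem_cons,
      List.take_append_drop]
  rw [h, List.prod_append, List.prod_cons, mul_assoc]; rfl

lemma cox_eq_cleft_sLin_cright (i : Fin n) (v : V n) :
    C.cox v = C.cleft i (C.sLin i (C.cright i v)) := by
  rw [cox_apply, prod_ofFn_sLin]; rfl

lemma cright_apply_of_le {i k : Fin n} (h : k ≤ i) (v : V n) : C.cright i v k = v k :=
  C.cright_mem_coordFixing h v

lemma cright_apply_of_lt {i k : Fin n} (h : i < k) (v : V n) : C.cright i v k = C.cox v k := by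
  rw [C.cox_eq_cleft_sLin_cright i, C.cleft_mem_coordFixing h.le, C.sLin_apply_of_ne h.ne]

lemma sub_cox_apply (v : V n) (i : Fin n) :
    (v - C.cox v) i =
      ∑ j, (C.a i j : ℂ) * v j - ∑ j, if i < j then (C.a i j : ℂ) * (v - C.cox v) j else 0 := by
  have hcox : C.cox v i = v i - ∑ j, (C.a i j : ℂ) * C.cright i v j := by
    rw [C.cox_eq_cleft_sLin_cright i, C.cleft_mem_coordFixing le_rfl, sLin_apply_self,
      cright_apply_of_le C le_rfl]
  rw [Pi.sub_apply, hcox, sub_sub_cancel, ← Finset.sum_sub_distrib]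
  refine Finset.sum_congr rfl fun j _ => ?_
  by_cases h : i < j
  · rw [if_pos h, cright_apply_of_lt C h, Pi.sub_apply]; ring
  · rw [if_neg h, cright_apply_of_le C (not_lt.mp h), sub_zero]

theorem K_sub_ω_sub_cox (x v : V n) :
    C.K x (v - C.cox v) - C.ω x (v - C.cox v) = 2 * C.K x v := by
  have h : (C.K - C.ω).flip (v - C.cox v) = (2 : ℂ) • C.K.flip v := by
    refine (Pi.basisFun ℂ (Fin n)).ext fun i => ?_
    have hi : C.K (α i) (v - C.cox v) - C.ω (α i) (v - C.cox v) = 2 * C.K (α i) v := by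
      rw [K_sub_ω_α_left, K_α_left, sub_cox_apply]
      ring
    simp only [LinearMap.sub_apply, LinearMap.flip_apply, LinearMap.smul_apply,
      Pi.basisFun_apply, smul_eq_mul]
    exact hi
  simpa only [LinearMap.sub_apply, LinearMap.flip_apply, LinearMap.smul_apply, smul_eq_mul]
    using LinearMap.congr_fun h x

lemma eq_zero_of_K_eq_ω {y : V n} (h : ∀ x, C.K x y = C.ω x y) : y = 0 := by
  by_contra hy
  obtain ⟨k, hk⟩ := Function.ne_iff.mp hy
  set S := Finset.univ.filter fun j => y j ≠ 0
  have hS : S.Nonempty := ⟨k, by simpa [S] using hk⟩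
  set i := S.max' hS
  have hi : y i ≠ 0 := by simpa [S] using S.max'_mem hS
  have above : ∀ j, i < j → y j = 0 := fun j hij => by
    by_contra hj
    exact not_lt.mpr (S.le_max' j (by simpa [S] using hj)) hij
  have h0 := sub_eq_zero.mpr (h (α i))
  rw [K_sub_ω_α_left,
    Finset.sum_eq_zero fun j _ => by split_ifs with hj <;> simp [above j, *]] at h0
  simp [C.d_ne_zero i, hi] at h0

lemma eq_zero_of_cartan_sum_eq_zero {k : Fin n} {g : Fin n → ℝ} (hk : g k = 0)
    (hg : ∀ i, ∑ j, (C.a i j : ℝ) * g j = 0) : g = 0 := by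
  by_contra hne
  have hJ : Finset.univ.erase k ≠ Finset.univ := fun h =>
    Finset.notMem_erase k Finset.univ (h.symm ▸ Finset.mem_univ k)
  have hpos := C.proper_posDef _ hJ g (fun i hi => by
    obtain rfl : i = k := by simpa using hi
    exact hk) hne
  have hzero : ∑ i, ∑ j, g i * g j * (C.d i * C.a i j) = 0 := by
    refine Finset.sum_eq_zero fun i _ => ?_
    calc _ = g i * C.d i * ∑ j, (C.a i j : ℝ) * g j := by
          rw [Finset.mul_sum]; exact Finset.sum_congr rfl fun _ _ => by ring
      _ = 0 := by rw [hg, mul_zero]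
  linarith

lemma eq_zero_of_K_eq_zero {k : Fin n} {v : V n} (hk : v k = 0) (hv : ∀ x, C.K x v = 0) :
    v = 0 := by
  have hA : ∀ i, ∑ j, (C.a i j : ℂ) * v j = 0 := fun i => by rw [← K_coroot_left, hv]
  have hre : (fun j => (v j).re) = 0 := C.eq_zero_of_cartan_sum_eq_zero (k := k) (by simp [hk])
    fun i => by simpa using congrArg Complex.re (hA i)
  have him : (fun j => (v j).im) = 0 := C.eq_zero_of_cartan_sum_eq_zero (k := k) (by simp [hk])
    fun i => by simpa using congrArg Complex.im (hA i)
  funext j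
  exact Complex.ext (congrFun hre j) (congrFun him j)

lemma δv_ne_zero [NeZero n] : C.δv ≠ 0 := fun h => C.dz_ne_zero 0 (congrFun h 0)

lemma ker_K [NeZero n] : LinearMap.ker C.K = ℂ ∙ C.δv := by
  refine le_antisymm (fun v hv => ?_) ((Submodule.span_singleton_le_iff_mem _ _).mpr
    (LinearMap.ext C.K_δ_left))
  set t := v 0 / C.dz 0
  have hw : v - t • C.δv = 0 := by
    refine C.eq_zero_of_K_eq_zero (k := 0) ?_ fun x => ?_
    · simp [t, δv, C.dz_ne_zero 0]
    · rw [map_sub, map_smul, K_δ_right, K_symm, LinearMap.mem_ker.mp hv]; simp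
  exact Submodule.mem_span_singleton.mpr ⟨t, (sub_eq_zero.mp hw).symm⟩

lemma range_K [NeZero n] : LinearMap.range C.K = (ℂ ∙ C.δv).dualAnnihilator := by
  refine Submodule.eq_of_le_of_finrank_eq ?_ ?_
  · rintro _ ⟨v, rfl⟩
    rw [Submodule.mem_dualAnnihilator]
    intro w hw
    obtain ⟨t, rfl⟩ := Submodule.mem_span_singleton.mp hw
    rw [map_smul, K_δ_right, smul_zero]
  · have h1 := LinearMap.finrank_range_add_finrank_ker C.K
    have h2 := Subspace.finrank_add_finrank_dualAnnihilator_eq (ℂ ∙ C.δv)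
    rw [ker_K, finrank_span_singleton C.δv_ne_zero] at h1
    rw [finrank_span_singleton C.δv_ne_zero] at h2
    exact Nat.add_right_cancel (h1.trans (h2.symm.trans (add_comm _ _)))

theorem exists_cox_sub_self_eq_δv [NeZero n] : ∃ γ, C.cox γ - γ = C.δv := by
  obtain ⟨γ, hγ⟩ : (2⁻¹ : ℂ) • C.ω.flip C.δv ∈ LinearMap.range C.K := by
    rw [range_K, Submodule.mem_dualAnnihilator]
    intro w hw
    obtain ⟨t, rfl⟩ := Submodule.mem_span_singleton.mp hw
    simp [ω_self]
  refine ⟨γ, sub_eq_zero.mp (C.eq_zero_of_K_eq_ω fun x => ?_)⟩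
  have h1 := C.K_sub_ω_sub_cox x γ
  have h2 : 2 * C.K x γ = C.ω x C.δv := by
    rw [K_symm, hγ]; simp
  simp only [map_sub, K_δ_right] at h1 ⊢
  linear_combination -h1 - h2

lemma eq_zero_of_cox_eq_self {k : Fin n} {u : V n} (hk : u k = 0) (hu : C.cox u = u) : u = 0 := by
  refine C.eq_zero_of_K_eq_zero hk fun x => ?_
  have h := C.K_sub_ω_sub_cox x u
  rw [hu, sub_self, map_zero, map_zero, sub_zero] at h
  linear_combination -h / 2

lemma mem_Vfin {aff : Fin n} {v : V n} : v ∈ Vfin aff ↔ v aff = 0 := by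
  have hα : (α : Fin n → V n) = Pi.basisFun ℂ (Fin n) := funext fun i => (Pi.basisFun_apply ..).symm
  rw [Vfin, hα, Module.Basis.mem_span_image]
  simp [Set.subset_def, not_imp_not]

lemma θv_apply_self (aff : Fin n) : C.θv aff aff = 0 := by simp [θv, δv, α]

lemma K_θv_left (aff : Fin n) (v : V n) : C.K (C.θv aff) v = -C.dz aff * C.K (α aff) v := by
  simp [θv, K_δ_left]

lemma K_θv_θv (aff : Fin n) : C.K (C.θv aff) (C.θv aff) = 2 * C.d aff * C.dz aff ^ 2 := by
  have hαα : C.K (α aff) (α aff) = 2 * C.d aff := by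
    rw [K_α_left]
    simp [α, Pi.single_apply, C.diag, mul_comm]
  rw [K_θv_left, K_symm, K_θv_left, hαα]
  ring

lemma K_coroot_θv_left (aff : Fin n) (v : V n) :
    C.K ((2 / C.K (C.θv aff) (C.θv aff)) • C.θv aff) v = -C.K (C.coroot aff) v / C.dz aff := by
  have hd := C.d_ne_zero aff
  have hm := C.dz_ne_zero aff
  rw [map_smul, LinearMap.smul_apply, smul_eq_mul, K_θv_θv, K_θv_left, K_α_left, K_coroot_left]
  field_simp

lemma sLin_eq_tRefl_add (aff : Fin n) (v : V n) :
    C.sLin aff v = C.tRefl (C.θv aff) v +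
      C.K ((2 / C.K (C.θv aff) (C.θv aff)) • C.θv aff) v • C.δv := by
  have hm := C.dz_ne_zero aff
  rw [tRefl, reflMap_apply, K_coroot_θv_left, sLin, reflMap_apply, θv]
  match_scalars <;> field_simp
  ring

lemma cox_eq_cleft_tRefl_cright_add (aff : Fin n) (v : V n) :
    C.cox v = (C.cleft aff * C.tRefl (C.θv aff) * C.cright aff) v +
      C.K ((2 / C.K (C.θv aff) (C.θv aff)) • C.θv aff) (C.cright aff v) • C.δv := by
  rw [cox_eq_cleft_sLin_cright C aff, sLin_eq_tRefl_add, map_add, map_smul, cleft_δv]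
  rfl

lemma tRefl_θv_mem_coordFixing (aff : Fin n) : C.tRefl (C.θv aff) ∈ coordFixing aff := fun v => by
  simp [tRefl, reflMap_apply, θv_apply_self]

lemma cleft_tRefl_cright_mem_coordFixing (aff : Fin n) :
    C.cleft aff * C.tRefl (C.θv aff) * C.cright aff ∈ coordFixing aff :=
  mul_mem (mul_mem (C.cleft_mem_coordFixing le_rfl) (C.tRefl_θv_mem_coordFixing aff))
    (C.cright_mem_coordFixing le_rfl)

theorem cox_sub_self_eq_δv_iff (aff : Fin n) (γ : V n) :
    C.cox γ - γ = C.δv ↔ (C.cleft aff * C.tRefl (C.θv aff) * C.cright aff) γ = γ ∧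
      C.K ((2 / C.K (C.θv aff) (C.θv aff)) • C.θv aff) (C.cright aff γ) = 1 := by
  rw [cox_eq_cleft_tRefl_cright_add C aff]
  set w := C.cleft aff * C.tRefl (C.θv aff) * C.cright aff
  set τ := C.K ((2 / C.K (C.θv aff) (C.θv aff)) • C.θv aff) (C.cright aff γ)
  refine ⟨fun h => ?_, fun ⟨hw, hτ⟩ => by rw [hw, hτ, one_smul, add_sub_cancel_left]⟩
  have hτ : τ = 1 := by
    have hw : w γ aff = γ aff := C.cleft_tRefl_cright_mem_coordFixing aff γ
    have h_aff := congrFun h aff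
    simp only [Pi.sub_apply, Pi.add_apply, Pi.smul_apply, smul_eq_mul, hw,
      add_sub_cancel_left, δv] at h_aff
    exact (mul_eq_right₀ (C.dz_ne_zero aff)).mp h_aff
  rw [hτ, one_smul, add_sub_right_comm, add_eq_right, sub_eq_zero] at h
  exact ⟨h, hτ⟩

theorem existsUnique_mem_Vfin_cox_sub_self_eq_δv (aff : Fin n) :
    ∃! γ, γ ∈ Vfin aff ∧ C.cox γ - γ = C.δv := by
  have : NeZero n := NeZero.of_pos aff.pos
  obtain ⟨γ₀, hγ₀⟩ := C.exists_cox_sub_self_eq_δv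
  set γ := γ₀ - (γ₀ aff / C.dz aff) • C.δv
  have hγ : γ ∈ Vfin aff := by simp [γ, mem_Vfin, δv, C.dz_ne_zero aff]
  have hγδ : C.cox γ - γ = C.δv := by
    rw [map_sub, map_smul, cox_δv, sub_sub_sub_cancel_right, hγ₀]
  refine ⟨γ, ⟨hγ, hγδ⟩, fun y ⟨hy, hyδ⟩ => sub_eq_zero.mp ?_⟩
  refine C.eq_zero_of_cox_eq_self (k := aff) ?_ ?_
  · rw [Pi.sub_apply, mem_Vfin.mp hy, mem_Vfin.mp hγ, sub_zero]
  · rw [map_sub]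
    linear_combination hyδ - hγδ

theorem generalized_eigenvector_general {n : ℕ} (C : AffineGCM n) (aff : Fin n) :
    (∃! γ : V n, γ ∈ Vfin aff ∧ C.cox γ - γ = C.δv) ∧
    (∀ γ : V n, (γ ∈ Vfin aff ∧ C.cox γ - γ = C.δv) ↔
      (γ ∈ Vfin aff ∧ (C.cleft aff * C.tRefl (C.θv aff) * C.cright aff) γ = γ ∧
        C.K ((2 / C.K (C.θv aff) (C.θv aff)) • C.θv aff) (C.cright aff γ) = 1)) :=
  ⟨C.existsUnique_mem_Vfin_cox_sub_self_eq_δv aff,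
    fun γ => and_congr_right fun _ => C.cox_sub_self_eq_δv_iff aff γ⟩

/-- Proposition 3.1(2): there is a unique generalized `1`-eigenvector `γ_c` of `c`
in `V_fin`, and it is the unique `v ∈ V_fin` fixed by `c_◁ t_θ c_▷` with
`K (θ^∨) (c_▷ v) = 1`. -/
theorem generalized_eigenvector {n : ℕ} (C : AffineGCM n) (aff : Fin n)
    (haff : ((Subgroup.closure (C.s '' {j : Fin n | j ≠ aff}) : Subgroup (V n ≃ₗ[ℂ] V n)) : Set (V n ≃ₗ[ℂ] V n)).Finite) :
    (∃! γ : V n, γ ∈ Vfin aff ∧ C.cox γ - γ = C.δv) ∧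
    (∀ γ : V n, (γ ∈ Vfin aff ∧ C.cox γ - γ = C.δv) ↔
      (γ ∈ Vfin aff ∧ (C.cleft aff * C.tRefl (C.θv aff) * C.cright aff) γ = γ ∧
        C.K ((2 / C.K (C.θv aff) (C.θv aff)) • C.θv aff) (C.cright aff γ) = 1)) :=
  generalized_eigenvector_general C aff

end AffineGCM
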